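/- arXiv:1105.5500 — 3 statements merged into one kernel-verified Lean document; each statement's English description precedes it below -/
import Mathlib

section
/- Injectivity half of the Struktursatz: with C as above, if φ : P → Q is a nonzero morphism of projective objects and every simple submodule of the socle of Q is a homomorphic image of a projective-injective object, then there exists a projective-injective object X and a morphism ψ : X → P with φ∘ψ ≠ 0. -/
open CategoryTheory CategoryTheory.Limits

namespace Stmt13

variable {C : Type*} [Category C] [Abelian C]

/-!
A nonzero `φ : P ⟶ Q` has a nonzero image, which contains a simple subobject `S`; since `S` is
also a simple subobject of `Q`, some projective-injective `X` maps onto it. Projectivity of `X`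
lifts `X ↠ S ↪ image φ` along the epimorphism `P ↠ image φ` to `ψ : X ⟶ P`, and then `ψ ≫ φ` is
the nonzero composite `X ↠ S ↪ Q`.
-/

theorem not_isZero_image_of_ne_zero {P Q : C} {f : P ⟶ Q} (hf : f ≠ 0) :
    ¬IsZero (Abelian.image f) := fun h =>
  hf <| by rw [← Abelian.image.fac f, h.eq_zero_of_src (Abelian.image.ι f), comp_zero]

theorem epi_comp_mono_ne_zero {X S Y : C} (e : X ⟶ S) [Epi e] (m : S ⟶ Y) [Mono m]
    (hS : ¬IsZero S) : e ≫ m ≠ 0 := fun h =>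
  hS <| IsZero.of_mono_eq_zero m <| by rwa [← cancel_epi e, comp_zero]

theorem struktursatz_injectivity_general
    (hfl : ∀ M : C, ¬ IsZero M → ∃ (S : C) (i : S ⟶ M), Simple S ∧ Mono i)
    (P Q : C)
    (hsoc : ∀ (S : C) (i : S ⟶ Q), Simple S → Mono i →
      ∃ (X : C) (e : X ⟶ S), Projective X ∧ Injective X ∧ Epi e)
    (φ : P ⟶ Q) (hφ : φ ≠ 0) :
    ∃ (X : C) (ψ : X ⟶ P), Projective X ∧ Injective X ∧ ψ ≫ φ ≠ 0 := by
  obtain ⟨S, i, hS, hi⟩ := hfl _ (not_isZero_image_of_ne_zero hφ)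
  obtain ⟨X, e, hX, hXi, he⟩ := hsoc S (i ≫ Abelian.image.ι φ) hS inferInstance
  obtain ⟨ψ, hψ⟩ := hX.factors (e ≫ i) (Abelian.factorThruImage φ)
  refine ⟨X, ψ, hX, hXi, ?_⟩
  rw [← Abelian.image.fac φ, ← Category.assoc, hψ, Category.assoc]
  exact epi_comp_mono_ne_zero e _ (Simple.not_isZero S)

/-- Injectivity half of the Struktursatz: in an abelian category with finite
length objects (so every nonzero object has a simple subobject), if φ : P → Q
is a nonzero morphism of projective objects and every simple subobject of
(the socle of) Q is a homomorphic image of a projective-injective object, then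
there is a projective-injective X and ψ : X ⟶ P with ψ ≫ φ ≠ 0. In particular
the restriction functor Hom(−, −)|_{proj-inj} is faithful on projectives. -/
theorem struktursatz_injectivity
    (hfl : ∀ M : C, ¬ IsZero M → ∃ (S : C) (i : S ⟶ M), Simple S ∧ Mono i)
    (P Q : C) (hP : Projective P) (hQ : Projective Q)
    (hsoc : ∀ (S : C) (i : S ⟶ Q), Simple S → Mono i →
      ∃ (X : C) (e : X ⟶ S), Projective X ∧ Injective X ∧ Epi e)
    (φ : P ⟶ Q) (hφ : φ ≠ 0) :
    ∃ (X : C) (ψ : X ⟶ P), Projective X ∧ Injective X ∧ ψ ≫ φ ≠ 0 :=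
  struktursatz_injectivity_general hfl P Q hsoc φ hφ

end Stmt13
end

section
/- Trace of projective-injectives under tensoring: let C be an abelian category and T : C → C an exact functor admitting an exact left and right adjoint, such that T preserves projective-injective objects. Then for every object N, T(Tr_{PI}(N)) ≅ Tr_{PI}(T(N)), where Tr_{PI}(N) denotes the sum of images of all morphisms from projective-injective objects to N. -/
/-!
Every morphism `M ⟶ T N` from a projective-injective `M` is the transpose along `G ⊣ T` of a
morphism `G M ⟶ N`; as `T` is exact and `G` is adjoint to it on both sides, `G M` is again
projective-injective, so that morphism factors through `Tr N` and the original one through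
`T (Tr N)`. Conversely, by `T ⊣ G`, `T f` factors through a subobject `u` of `T N` exactly when
`f` is killed by `N ⟶ G (T N) ⟶ G (T N / u)`. If `u` contains `Tr (T N)`, this kills every
morphism from a projective-injective into `N`, because `T` preserves projective-injectives; so
it kills `Tr N`, and `T (Tr N) ⊆ u`.
-/

open CategoryTheory CategoryTheory.Limits

namespace CategoryTheory

variable {C D : Type*} [Category C] [Category D]

theorem Limits.imageSubobject_le_iff_factors {A B : C} (f : A ⟶ B) [HasImage f]
    (s : Subobject B) :
    imageSubobject f ≤ s ↔ s.Factors f :=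
  ⟨fun h => Subobject.factors_of_le f h
      (by simpa using imageSubobject_factors_comp_self f (𝟙 A)),
    fun h => imageSubobject_le f _ (s.factorThru_arrow f h)⟩

theorem Subobject.factors_iff_comp_cokernel_π_eq_zero [Abelian C] {A B : C} (f : A ⟶ B)
    (s : Subobject B) :
    s.Factors f ↔ f ≫ cokernel.π s.arrow = 0 :=
  ⟨fun h => by rw [← s.factorThru_arrow f h, Category.assoc, cokernel.condition, comp_zero],
    fun h => Abelian.monoLift_comp s.arrow f h ▸ Subobject.factors_comp_arrow _⟩

variable {T : C ⥤ D} {G : D ⥤ C}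

theorem Adjunction.factors_imageSubobject_map_arrow [HasImages D] (adj : G ⊣ T) {M : D} {N : C}
    {s : Subobject N} {f : M ⟶ T.obj N} (h : s.Factors ((adj.homEquiv M N).symm f)) :
    (imageSubobject (T.map s.arrow)).Factors f := by
  have hf : (adj.unit.app M ≫ T.map (s.factorThru _ h)) ≫ T.map s.arrow = f := by
    rw [Category.assoc, ← T.map_comp, Subobject.factorThru_arrow]
    exact (adj.homEquiv_unit _ _ _).symm.trans ((adj.homEquiv M N).apply_symm_apply f)
  exact hf ▸ Subobject.factors_of_factors_right _
    ((imageSubobject_le_iff_factors _ _).1 le_rfl)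

theorem Adjunction.factors_map_iff_factors_kernelSubobject [Abelian C] [Abelian D]
    (adj : T ⊣ G) {M N : C} (u : Subobject (T.obj N)) (f : M ⟶ N) :
    u.Factors (T.map f) ↔
      (kernelSubobject (adj.unit.app N ≫ G.map (cokernel.π u.arrow))).Factors f := by
  have := adj.isRightAdjoint
  have htranspose : adj.homEquiv M _ (T.map f ≫ cokernel.π u.arrow) =
      f ≫ adj.unit.app N ≫ G.map (cokernel.π u.arrow) := by
    rw [adj.homEquiv_naturality_left, adj.homEquiv_unit]
  have hzero : adj.homEquiv M (cokernel u.arrow) 0 = 0 := by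
    rw [adj.homEquiv_unit, G.map_zero, comp_zero]
  rw [Subobject.factors_iff_comp_cokernel_π_eq_zero, kernelSubobject_factors_iff, ← htranspose,
    ← hzero, (adj.homEquiv _ _).apply_eq_iff_eq]

theorem projective_and_injective_obj_of_biadjoint (adj₁ : G ⊣ T) (adj₂ : T ⊣ G) {M : D}
    (hP : Projective M) (hI : Injective M) : Projective (G.obj M) ∧ Injective (G.obj M) :=
  have := Functor.preservesEpimorphisms_of_adjunction adj₂
  have := Functor.preservesMonomorphisms_of_adjunction adj₁
  ⟨adj₁.map_projective M hP, adj₂.map_injective M hI⟩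

end CategoryTheory

namespace Stmt14

variable {C : Type*} [Category C] [Abelian C]

/-- `IsPITrace N t` says that the subobject t of N is the trace Tr_{PI}(N) of
the projective-injective objects in N: it contains the image of every morphism
from a projective-injective object into N, and it is the least such subobject. -/
def IsPITrace (N : C) (t : Subobject N) : Prop :=
  (∀ M : C, Projective M → Injective M → ∀ f : M ⟶ N, imageSubobject f ≤ t) ∧
  (∀ t' : Subobject N,
    (∀ M : C, Projective M → Injective M → ∀ f : M ⟶ N, imageSubobject f ≤ t') →
    t ≤ t')

theorem isPITrace_iff_factors {N : C} {t : Subobject N} :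
    IsPITrace N t ↔
      (∀ M : C, Projective M → Injective M → ∀ f : M ⟶ N, t.Factors f) ∧
      ∀ s : Subobject N,
        (∀ M : C, Projective M → Injective M → ∀ f : M ⟶ N, s.Factors f) → t ≤ s := by
  simp only [IsPITrace, imageSubobject_le_iff_factors]

namespace IsPITrace

variable {N : C} {t : Subobject N}

theorem factors (ht : IsPITrace N t) {M : C} (hP : Projective M) (hI : Injective M)
    (f : M ⟶ N) : t.Factors f :=
  (isPITrace_iff_factors.1 ht).1 M hP hI f

theorem le_of_forall_factors (ht : IsPITrace N t) {s : Subobject N}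
    (hs : ∀ M : C, Projective M → Injective M → ∀ f : M ⟶ N, s.Factors f) : t ≤ s :=
  (isPITrace_iff_factors.1 ht).2 s hs

theorem unique {t' : Subobject N} (ht : IsPITrace N t) (ht' : IsPITrace N t') : t = t' :=
  le_antisymm (ht.2 t' ht'.1) (ht'.2 t ht.1)

theorem map {D : Type*} [Category D] [Abelian D] {T : C ⥤ D} {G : D ⥤ C}
    (adj₁ : G ⊣ T) (adj₂ : T ⊣ G)
    (hTPI : ∀ M : C, Projective M → Injective M →
      Projective (T.obj M) ∧ Injective (T.obj M))
    (ht : IsPITrace N t) :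
    IsPITrace (T.obj N) (imageSubobject (T.map t.arrow)) := by
  refine isPITrace_iff_factors.2 ⟨fun M hP hI f => ?_, fun s hs => ?_⟩
  · obtain ⟨hGP, hGI⟩ := projective_and_injective_obj_of_biadjoint adj₁ adj₂ hP hI
    exact adj₁.factors_imageSubobject_map_arrow (ht.factors hGP hGI _)
  · have hts : t ≤ kernelSubobject (adj₂.unit.app N ≫ G.map (cokernel.π s.arrow)) :=
      ht.le_of_forall_factors fun M hP hI f =>
        (adj₂.factors_map_iff_factors_kernelSubobject s f).1
          (hs _ (hTPI M hP hI).1 (hTPI M hP hI).2 (T.map f))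
    exact (imageSubobject_le_iff_factors _ _).2
      ((adj₂.factors_map_iff_factors_kernelSubobject s t.arrow).2
        (Subobject.factors_of_le _ hts t.factors_self))

end IsPITrace

/-- Trace of projective-injectives under an exact functor T with exact left and
right adjoint G which preserves projective-injective objects:
T(Tr_{PI}(N)) ≅ Tr_{PI}(T(N)) for every object N. -/
theorem trace_commutes_with_biadjoint_functor
    (T G : C ⥤ C) (adj₁ : G ⊣ T) (adj₂ : T ⊣ G)
    (hTPI : ∀ M : C, Projective M → Injective M →
      Projective (T.obj M) ∧ Injective (T.obj M))
    (N : C) (t : Subobject N) (t' : Subobject (T.obj N))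
    (ht : IsPITrace N t) (ht' : IsPITrace (T.obj N) t') :
    Nonempty (T.obj (t : C) ≅ (t' : C)) := by
  have := Functor.preservesMonomorphisms_of_adjunction adj₁
  have heq : imageSubobject (T.map t.arrow) = t' := (ht.map adj₁ adj₂ hTPI).unique ht'
  exact ⟨(imageMonoIsoSource _).symm ≪≫ (imageSubobjectIso _).symm ≪≫
    Subobject.isoOfEq _ _ heq⟩

end Stmt14
end

section
/- Equivalence from adjoint pair with both compositions identity on simples: let F : C → D and G : D → C be exact functors between abelian categories with all objects of finite length, with G left and right adjoint to F. If F∘G is isomorphic to the identity on D, and G∘F applied to every simple object of C is isomorphic to that simple object (naturally), then F and G are mutually inverse equivalences of categories. -/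
/-! Being both left and right adjoints, `F` and `G` are exact. The unit `𝟭 C ⟶ F ⋙ G` is then a
natural transformation between exact functors that is an isomorphism on simples, so the five
lemma, applied along a composition series, makes it an isomorphism on every object of finite
length. Together with `G ⋙ F ≅ 𝟭 D` this gives the equivalence. -/

open CategoryTheory CategoryTheory.Limits

namespace Stmt18

variable {C D : Type*} [Category C] [Category D] [Abelian C] [Abelian D]

/-- Finite length: M has a finite filtration with simple subquotients. -/
inductive FinLen {A : Type*} [Category A] [Abelian A] : A → Prop
  | of_isZero (M : A) (h : IsZero M) : FinLen M
  | step (S M N : A) (i : S ⟶ M) (p : M ⟶ N) (w : i ≫ p = 0) (hS : Simple S)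
      (hse : (ShortComplex.mk i p w).ShortExact) (hN : FinLen N) : FinLen M

theorem FinLen.isIso_app {A B : Type*} [Category A] [Category B] [Abelian A] [Abelian B]
    {Φ Ψ : A ⥤ B} [Φ.PreservesZeroMorphisms] [PreservesFiniteLimits Φ]
    [PreservesFiniteColimits Φ] [Ψ.PreservesZeroMorphisms] [PreservesFiniteLimits Ψ]
    [PreservesFiniteColimits Ψ] (η : Φ ⟶ Ψ) (hsimple : ∀ S : A, Simple S → IsIso (η.app S))
    {M : A} (hM : FinLen M) : IsIso (η.app M) := by
  induction hM with
  | of_isZero M hzero =>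
    exact isIso_of_source_target_iso_zero _ (Φ.map_isZero hzero).isoZero
      (Ψ.map_isZero hzero).isoZero
  | step S M N i p w hS hse _ ih =>
    exact ShortComplex.isIso₂_of_shortExact_of_isIso₁₃'
      ((ShortComplex.mk i p w).mapNatTrans η) (hse.map_of_exact Φ) (hse.map_of_exact Ψ)
      (hsimple S hS) ih

theorem equivalence_of_biadjoint_identity_on_simples_general
    (F : C ⥤ D) (G : D ⥤ C) (adj₁ : G ⊣ F) (adj₂ : F ⊣ G)
    (hflC : ∀ M : C, FinLen M)
    (hFG : G ⋙ F ≅ 𝟭 D)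
    (hsimple : ∀ S : C, Simple S → IsIso (adj₂.unit.app S)) :
    F.IsEquivalence ∧ G.IsEquivalence ∧ Nonempty (F ⋙ G ≅ 𝟭 C) := by
  have : PreservesLimits F := adj₁.rightAdjoint_preservesLimits
  have : PreservesColimits F := adj₂.leftAdjoint_preservesColimits
  have : PreservesLimits G := adj₂.rightAdjoint_preservesLimits
  have : PreservesColimits G := adj₁.leftAdjoint_preservesColimits
  have (M : C) : IsIso (adj₂.unit.app M) := (hflC M).isIso_app adj₂.unit hsimple
  have : IsIso adj₂.unit := NatIso.isIso_of_isIso_app _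
  let e : C ≌ D := .mk F G (asIso adj₂.unit) hFG
  exact ⟨e.isEquivalence_functor, e.isEquivalence_inverse, ⟨(asIso adj₂.unit).symm⟩⟩

/-- Equivalence from an adjoint pair with both compositions the identity on
simples: if F, G are exact (here: mutually adjoint on both sides, hence exact)
functors between abelian categories with all objects of finite length, F∘G is
isomorphic to the identity of D, and the unit of F ⊣ G is an isomorphism on
every simple object of C, then F and G are mutually inverse equivalences. -/
theorem equivalence_of_biadjoint_identity_on_simples
    (F : C ⥤ D) (G : D ⥤ C) (adj₁ : G ⊣ F) (adj₂ : F ⊣ G)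
    (hflC : ∀ M : C, FinLen M) (hflD : ∀ N : D, FinLen N)
    (hFG : G ⋙ F ≅ 𝟭 D)
    (hsimple : ∀ S : C, Simple S → IsIso (adj₂.unit.app S)) :
    F.IsEquivalence ∧ G.IsEquivalence ∧ Nonempty (F ⋙ G ≅ 𝟭 C) :=
  equivalence_of_biadjoint_identity_on_simples_general F G adj₁ adj₂ hflC hFG hsimple

end Stmt18
end
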